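/- Let H₁, H₂ be real Hilbert spaces and H = H₁ × H₂. Let Λ₁ : H₁ → E and Λ₂ : H₂ → E be bounded linear operators into a Hilbert space E, let μ₁, μ₂, α₁, α₂, ρ₀ > 0, and define K : H → H by K(h₁,h₂) = (μ₁ρ₀²h₁ + α₁Λ₁*(Λ₁h₁ + Λ₂h₂), μ₂ρ₀²h₂ + α₂Λ₂*(Λ₁h₁ + Λ₂h₂)). If μ₁ > α₂‖Λ₁‖²/(4ρ₀²) and μ₂ > α₁‖Λ₂‖²/(4ρ₀²), then (K h, h)_H ≥ τ‖h‖²_H for all h ∈ H, where τ = min over i=1,2 of (μᵢρ₀² − (α_{3−i}/4)‖Λᵢ‖²) > 0. -/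

import Mathlib

/-!
Writing `w = Λ₁h₁ + Λ₂h₂`, the first row of `⟪K h, h⟫` is
`μ₁ρ₀²‖h₁‖² + α₁⟪w, Λ₁h₁⟫`, and `⟪u + v, u⟫ = ‖u‖² + ⟪v, u⟫ ≥ ‖u‖² - ‖u‖‖v‖ ≥ -‖v‖²/4`.
So the first row is at least `μ₁ρ₀²‖h₁‖² - (α₁/4)‖Λ₂‖²‖h₂‖²`, and symmetrically for the second;
adding the two and collecting the `‖hᵢ‖²` terms gives the bound with constant `τ`.
-/

open ContinuousLinearMap
open scoped RealInnerProductSpace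

lemma neg_norm_sq_div_four_le_inner_add_self {F : Type*} [NormedAddCommGroup F]
    [InnerProductSpace ℝ F] (x y : F) : -(‖y‖ ^ 2 / 4) ≤ ⟪x + y, x⟫ := by
  have hxy : -(‖y‖ * ‖x‖) ≤ ⟪y, x⟫ := neg_le_of_abs_le (abs_real_inner_le_norm y x)
  rw [inner_add_left, real_inner_self_eq_norm_sq]
  nlinarith [sq_nonneg (2 * ‖x‖ - ‖y‖)]

lemma inner_smul_add_smul_adjoint_apply_self {F G : Type*}
    [NormedAddCommGroup F] [InnerProductSpace ℝ F] [CompleteSpace F]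
    [NormedAddCommGroup G] [InnerProductSpace ℝ G] [CompleteSpace G]
    (Λ : F →L[ℝ] G) (c α : ℝ) (h : F) (w : G) :
    ⟪c • h + α • adjoint Λ w, h⟫ = c * ‖h‖ ^ 2 + α * ⟪w, Λ h⟫ := by
  rw [inner_add_left, real_inner_smul_left, real_inner_smul_left, adjoint_inner_left,
    real_inner_self_eq_norm_sq]

lemma sub_le_inner_smul_add_smul_adjoint_apply_add {F G : Type*}
    [NormedAddCommGroup F] [InnerProductSpace ℝ F] [CompleteSpace F]
    [NormedAddCommGroup G] [InnerProductSpace ℝ G] [CompleteSpace G]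
    (Λ : F →L[ℝ] G) {α : ℝ} (hα : 0 ≤ α) (c : ℝ) (h : F) (v : G) :
    c * ‖h‖ ^ 2 - α / 4 * ‖v‖ ^ 2 ≤ ⟪c • h + α • adjoint Λ (Λ h + v), h⟫ := by
  rw [inner_smul_add_smul_adjoint_apply_self]
  linarith [mul_le_mul_of_nonneg_left (neg_norm_sq_div_four_le_inner_add_self (Λ h) v) hα]

lemma min_mul_add_le {a b x y : ℝ} (hx : 0 ≤ x) (hy : 0 ≤ y) :
    min a b * (x + y) ≤ a * x + b * y := by
  rw [mul_add]
  gcongr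
  exacts [min_le_left a b, min_le_right a b]

theorem stmt_1_general {H₁ H₂ E : Type*}
    [NormedAddCommGroup H₁] [InnerProductSpace ℝ H₁] [CompleteSpace H₁]
    [NormedAddCommGroup H₂] [InnerProductSpace ℝ H₂] [CompleteSpace H₂]
    [NormedAddCommGroup E] [InnerProductSpace ℝ E] [CompleteSpace E]
    (Λ₁ : H₁ →L[ℝ] E) (Λ₂ : H₂ →L[ℝ] E)
    (μ₁ μ₂ α₁ α₂ ρ₀ : ℝ)
    (hα₁ : 0 < α₁) (hα₂ : 0 < α₂) (hρ₀ : 0 < ρ₀)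
    (hμ₁ : α₂ * ‖Λ₁‖ ^ 2 / (4 * ρ₀ ^ 2) < μ₁)
    (hμ₂ : α₁ * ‖Λ₂‖ ^ 2 / (4 * ρ₀ ^ 2) < μ₂) :
    (0 < min (μ₁ * ρ₀ ^ 2 - α₂ / 4 * ‖Λ₁‖ ^ 2) (μ₂ * ρ₀ ^ 2 - α₁ / 4 * ‖Λ₂‖ ^ 2)) ∧
    ∀ h₁ : H₁, ∀ h₂ : H₂,
      min (μ₁ * ρ₀ ^ 2 - α₂ / 4 * ‖Λ₁‖ ^ 2) (μ₂ * ρ₀ ^ 2 - α₁ / 4 * ‖Λ₂‖ ^ 2)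
          * (‖h₁‖ ^ 2 + ‖h₂‖ ^ 2)
        ≤ (inner ℝ ((μ₁ * ρ₀ ^ 2) • h₁
              + α₁ • (ContinuousLinearMap.adjoint Λ₁) (Λ₁ h₁ + Λ₂ h₂)) h₁ : ℝ)
          + (inner ℝ ((μ₂ * ρ₀ ^ 2) • h₂
              + α₂ • (ContinuousLinearMap.adjoint Λ₂) (Λ₁ h₁ + Λ₂ h₂)) h₂ : ℝ) := by
  have h4ρ : 0 < 4 * ρ₀ ^ 2 := by positivity
  have hτ₁ : 0 < μ₁ * ρ₀ ^ 2 - α₂ / 4 * ‖Λ₁‖ ^ 2 := by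
    have := (div_lt_iff₀ h4ρ).mp hμ₁
    linarith
  have hτ₂ : 0 < μ₂ * ρ₀ ^ 2 - α₁ / 4 * ‖Λ₂‖ ^ 2 := by
    have := (div_lt_iff₀ h4ρ).mp hμ₂
    linarith
  refine ⟨lt_min hτ₁ hτ₂, fun h₁ h₂ => ?_⟩
  have hK₁ := sub_le_inner_smul_add_smul_adjoint_apply_add Λ₁ hα₁.le (μ₁ * ρ₀ ^ 2) h₁ (Λ₂ h₂)
  have hK₂ := sub_le_inner_smul_add_smul_adjoint_apply_add Λ₂ hα₂.le (μ₂ * ρ₀ ^ 2) h₂ (Λ₁ h₁)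
  rw [add_comm (Λ₂ h₂)] at hK₂
  have hΛ₁ : ‖Λ₁ h₁‖ ^ 2 ≤ ‖Λ₁‖ ^ 2 * ‖h₁‖ ^ 2 :=
    mul_pow ‖Λ₁‖ ‖h₁‖ 2 ▸ pow_le_pow_left₀ (norm_nonneg _) (Λ₁.le_opNorm h₁) 2
  have hΛ₂ : ‖Λ₂ h₂‖ ^ 2 ≤ ‖Λ₂‖ ^ 2 * ‖h₂‖ ^ 2 :=
    mul_pow ‖Λ₂‖ ‖h₂‖ 2 ▸ pow_le_pow_left₀ (norm_nonneg _) (Λ₂.le_opNorm h₂) 2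
  calc _ ≤ (μ₁ * ρ₀ ^ 2 - α₂ / 4 * ‖Λ₁‖ ^ 2) * ‖h₁‖ ^ 2
        + (μ₂ * ρ₀ ^ 2 - α₁ / 4 * ‖Λ₂‖ ^ 2) * ‖h₂‖ ^ 2 :=
        min_mul_add_le (by positivity) (by positivity)
    _ ≤ _ := by
      linarith [mul_le_mul_of_nonneg_left hΛ₁ hα₂.le, mul_le_mul_of_nonneg_left hΛ₂ hα₁.le]

/-- Coercivity of the Nash-equilibrium operator `K` on the product Hilbert space
`H = H₁ × H₂` (with the product inner product, written componentwise). -/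
theorem stmt_1 {H₁ H₂ E : Type*}
    [NormedAddCommGroup H₁] [InnerProductSpace ℝ H₁] [CompleteSpace H₁]
    [NormedAddCommGroup H₂] [InnerProductSpace ℝ H₂] [CompleteSpace H₂]
    [NormedAddCommGroup E] [InnerProductSpace ℝ E] [CompleteSpace E]
    (Λ₁ : H₁ →L[ℝ] E) (Λ₂ : H₂ →L[ℝ] E)
    (μ₁ μ₂ α₁ α₂ ρ₀ : ℝ)
    (hμ₁0 : 0 < μ₁) (hμ₂0 : 0 < μ₂) (hα₁ : 0 < α₁) (hα₂ : 0 < α₂) (hρ₀ : 0 < ρ₀)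
    (hμ₁ : α₂ * ‖Λ₁‖ ^ 2 / (4 * ρ₀ ^ 2) < μ₁)
    (hμ₂ : α₁ * ‖Λ₂‖ ^ 2 / (4 * ρ₀ ^ 2) < μ₂) :
    (0 < min (μ₁ * ρ₀ ^ 2 - α₂ / 4 * ‖Λ₁‖ ^ 2) (μ₂ * ρ₀ ^ 2 - α₁ / 4 * ‖Λ₂‖ ^ 2)) ∧
    ∀ h₁ : H₁, ∀ h₂ : H₂,
      min (μ₁ * ρ₀ ^ 2 - α₂ / 4 * ‖Λ₁‖ ^ 2) (μ₂ * ρ₀ ^ 2 - α₁ / 4 * ‖Λ₂‖ ^ 2)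
          * (‖h₁‖ ^ 2 + ‖h₂‖ ^ 2)
        ≤ (inner ℝ ((μ₁ * ρ₀ ^ 2) • h₁
              + α₁ • (ContinuousLinearMap.adjoint Λ₁) (Λ₁ h₁ + Λ₂ h₂)) h₁ : ℝ)
          + (inner ℝ ((μ₂ * ρ₀ ^ 2) • h₂
              + α₂ • (ContinuousLinearMap.adjoint Λ₂) (Λ₁ h₁ + Λ₂ h₂)) h₂ : ℝ) :=
  stmt_1_general Λ₁ Λ₂ μ₁ μ₂ α₁ α₂ ρ₀ hα₁ hα₂ hρ₀ hμ₁ hμ₂
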